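/- Let q = 4 and n = 1 + 2q + 2q^{e−1} + 2q^{e+1} with e > 1 an integer. Then g_{n,q} ≡ S_2 + X²S_e² + S_{e−1}²S_e² (mod X^{q^e} − X). If e is odd, then g_{n,q} is a permutation polynomial of F_{q^e}. -/

import Mathlib

open Polynomial Finset

/-!
Work over a ring of characteristic `2` and write `S_d(x) = ∑_{i<d} x^{4^i}`. For `c ∈ 𝔽₄` and
`n = 1 + 2(4^i + 4^j + 4^k)`, Frobenius gives
`(x + c)^n = (x + c)(x^{2·4^i} + c²)(x^{2·4^j} + c²)(x^{2·4^k} + c²)`, a cubic in `c` once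
`c⁴ = c` is used; summing over `𝔽₄` keeps only its `c³`-coefficient
`x + σ₂(x^{2·4^i}, x^{2·4^j}, x^{2·4^k})`. As `S_d(x⁴ - x) = x^{4^d} - x`, this is `G(x⁴ - x)` for
`G = X + (S_i S_j + S_j S_k + S_i S_k)²`, so `g_{n,4} = G` with `i, j, k = 1, e - 1, e + 1`, and
the congruence is a ring identity once `S_{e+1} = S_e + X^{4^e}` is used.

On `𝔽_{4^e}`, `t = S_e(x)` is the trace to `𝔽₄` and `g(x) = x + x⁴ + t²(x² + x^{2·4^{e-1}}) + t`.
For odd `e`, `g` preserves the trace, so `g(x) = g(y)` forces `z = x - y` to have trace `0` and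
to satisfy `z + z⁴ + t²(z² + z^{2·4^{e-1}}) = 0`; squaring gives `(z⁴ + z)(z⁴ + z + t) = 0`.
Taking traces in the second case gives `t = 0`, so in both cases `z ∈ 𝔽₄`, whose trace `e z = z`
vanishes.
-/

theorem pow_pow_eq_self_of_pow_eq_self {M : Type*} [Monoid M] {a : M} {q : ℕ} (h : a ^ q = a)
    (i : ℕ) : a ^ q ^ i = a := by
  induction i with
  | zero => simp
  | succ i ih => rw [pow_succ, pow_mul, ih, h]

theorem FiniteField.sum_pow_card_sub_one (K : Type*) [Field K] [Fintype K] :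
    ∑ x : K, x ^ (Fintype.card K - 1) = -1 := by
  classical
  have hpow : ∀ x : K, x ^ (Fintype.card K - 1) = 1 - if x = 0 then 1 else 0 := by
    intro x
    split_ifs with hx
    · rw [hx, zero_pow (by have := Fintype.one_lt_card (α := K); omega), sub_self]
    · rw [pow_card_sub_one_eq_one x hx, sub_zero]
  simp [hpow, sum_sub_distrib]

theorem two_eq_zero_of_card_eq_four {F : Type*} [Field F] [Fintype F]
    (hF : Fintype.card F = 4) : (2 : F) = 0 := by
  have h4 : ((4 : ℕ) : F) = 0 := hF ▸ FiniteField.cast_card_eq_zero F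
  exact pow_eq_zero_iff two_ne_zero |>.mp (by norm_num at h4 ⊢; exact h4)

theorem sum_cubic_of_card_eq_four {F A : Type*} [Field F] [Fintype F] [CommRing A]
    (hF : Fintype.card F = 4) (φ : F →+* A) (a b c d : A) :
    ∑ x : F, (a * φ x ^ 3 + b * φ x ^ 2 + c * φ x + d) = -a := by
  have hsum : ∀ i, ∑ x : F, φ x ^ i = φ (∑ x : F, x ^ i) := by simp [map_sum]
  have h3 := FiniteField.sum_pow_card_sub_one F
  have h2 := FiniteField.sum_pow_lt_card_sub_one F 2 (by omega)
  have h1 : ∑ x : F, φ x = 0 := by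
    simpa [map_sum] using congrArg φ (FiniteField.sum_pow_lt_card_sub_one F 1 (by omega))
  have h0 : (Fintype.card F : A) = 0 := by
    rw [← map_natCast φ, FiniteField.cast_card_eq_zero, map_zero]
  simp only [sum_add_distrib, ← mul_sum, sum_const, card_univ, nsmul_eq_mul, h0, hsum]
  rw [hF] at h3
  simp [h3, h2, h1]

theorem Polynomial.comp_left_injective {R : Type*} [CommRing R] [NoZeroDivisors R] {q : R[X]}
    (hq : q.natDegree ≠ 0) : Function.Injective fun p : R[X] => p.comp q := by
  intro p p' h
  have h0 : (p - p').comp q = 0 := by simpa [sub_comp, sub_eq_zero] using h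
  rcases comp_eq_zero_iff.mp h0 with h0 | ⟨-, hC⟩
  · exact sub_eq_zero.mp h0
  · exact absurd (hC ▸ natDegree_C _) hq

section CharTwo

variable {R : Type*} [CommRing R] [CharP R 2]

theorem add_pow_four_pow (x y : R) (i : ℕ) : (x + y) ^ 4 ^ i = x ^ 4 ^ i + y ^ 4 ^ i := by
  simpa [pow_mul] using add_pow_char_pow x y 2 (2 * i)

theorem sub_pow_four_pow (x y : R) (i : ℕ) : (x - y) ^ 4 ^ i = x ^ 4 ^ i - y ^ 4 ^ i := by
  simpa [pow_mul] using sub_pow_char_pow x y (p := 2) (2 * i)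

theorem add_pow_two_mul_four_pow {y : R} (hy : y ^ 4 = y) (x : R) (i : ℕ) :
    (x + y) ^ (2 * 4 ^ i) = x ^ (2 * 4 ^ i) + y ^ 2 := by
  rw [pow_mul', add_pow_four_pow, pow_pow_eq_self_of_pow_eq_self hy, CharTwo.add_sq, ← pow_mul']

theorem sum_add_pow_of_card_eq_four {F : Type*} [Field F] [Fintype F]
    (hF : Fintype.card F = 4) (φ : F →+* R) (x : R) (i j k : ℕ) :
    ∑ c : F, (x + φ c) ^ (1 + 2 * 4 ^ i + 2 * 4 ^ j + 2 * 4 ^ k) =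
      x + x ^ (2 * 4 ^ i + 2 * 4 ^ j) + x ^ (2 * 4 ^ j + 2 * 4 ^ k) +
        x ^ (2 * 4 ^ i + 2 * 4 ^ k) := by
  have hφ : ∀ c, φ c ^ 4 = φ c := fun c => by rw [← map_pow, ← hF, FiniteField.pow_card]
  have hfactor : ∀ c, (x + φ c) ^ (1 + 2 * 4 ^ i + 2 * 4 ^ j + 2 * 4 ^ k) =
      (x + φ c) * (x ^ (2 * 4 ^ i) + φ c ^ 2) * (x ^ (2 * 4 ^ j) + φ c ^ 2) *
        (x ^ (2 * 4 ^ k) + φ c ^ 2) := by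
    intro c
    simp only [pow_add, pow_one, add_pow_two_mul_four_pow (hφ c)]
  simp only [hfactor, pow_add x]
  generalize x ^ (2 * 4 ^ i) = P, x ^ (2 * 4 ^ j) = Q, x ^ (2 * 4 ^ k) = R
  have hcubic : ∀ c, (x + φ c) * (P + φ c ^ 2) * (Q + φ c ^ 2) * (R + φ c ^ 2) =
      (x + (P * Q + Q * R + P * R)) * φ c ^ 3
        + (x * (P * Q + Q * R + P * R) + (P + Q + R)) * φ c ^ 2
        + (P * Q * R + x * (P + Q + R) + 1) * φ c + x * P * Q * R := by
    intro c
    linear_combination (norm := ring_nf) (x * (P + Q + R) + φ c * (P + Q + R) + φ c ^ 2 * x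
      + φ c ^ 3 + 1) * hφ c
  rw [sum_congr rfl fun c _ => hcubic c, sum_cubic_of_card_eq_four hF, CharTwo.neg_eq]
  ring

end CharTwo

section frobSum

variable {R : Type*} [CommRing R]

-- the paper's `S_d`, evaluated at `x`
def frobSum (d : ℕ) (x : R) : R := ∑ i ∈ range d, x ^ 4 ^ i

theorem frobSum_succ (d : ℕ) (x : R) : frobSum (d + 1) x = frobSum d x + x ^ 4 ^ d :=
  sum_range_succ _ _

theorem frobSum_one (x : R) : frobSum 1 x = x := by
  simp [frobSum]

theorem map_frobSum {S : Type*} [CommRing S] (φ : R →+* S) (d : ℕ) (x : R) :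
    φ (frobSum d x) = frobSum d (φ x) := by
  simp [frobSum, map_sum]

theorem frobSum_pow_four_add_self (d : ℕ) (x : R) :
    frobSum d (x ^ 4) + x = frobSum d x + x ^ 4 ^ d := by
  induction d with
  | zero => simp [frobSum]
  | succ d ih =>
    rw [frobSum_succ, frobSum_succ, ← pow_mul, ← pow_succ']
    linear_combination ih

theorem frobSum_pow_four {d : ℕ} {x : R} (hx : x ^ 4 ^ d = x) :
    frobSum d (x ^ 4) = frobSum d x := by
  simpa [hx] using frobSum_pow_four_add_self d x

theorem frobSum_pow_four_pow {d : ℕ} {x : R} (hx : x ^ 4 ^ d = x) (k : ℕ) :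
    frobSum d (x ^ 4 ^ k) = frobSum d x := by
  induction k with
  | zero => simp
  | succ k ih =>
    rw [pow_succ, pow_mul, frobSum_pow_four (by rw [← pow_mul, mul_comm, pow_mul, hx]), ih]

theorem frobSum_mul_of_pow_four_eq {c : R} (hc : c ^ 4 = c) (d : ℕ) (x : R) :
    frobSum d (c * x) = c * frobSum d x := by
  simp only [frobSum, mul_sum, mul_pow, pow_pow_eq_self_of_pow_eq_self hc]

theorem frobSum_of_pow_four_eq {c : R} (hc : c ^ 4 = c) (d : ℕ) : frobSum d c = d * c := by
  simp [frobSum, pow_pow_eq_self_of_pow_eq_self hc]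

variable [CharP R 2]

theorem frobSum_add (d : ℕ) (x y : R) : frobSum d (x + y) = frobSum d x + frobSum d y := by
  simp only [frobSum, add_pow_four_pow, sum_add_distrib]

theorem frobSum_sq (d : ℕ) (x : R) : frobSum d (x ^ 2) = frobSum d x ^ 2 := by
  simp only [frobSum, CharTwo.sum_sq, ← pow_mul, mul_comm]

theorem pow_four_frobSum {d : ℕ} {x : R} (hx : x ^ 4 ^ d = x) :
    frobSum d x ^ 4 = frobSum d x := by
  rw [show 4 = 2 * 2 from rfl, pow_mul, ← frobSum_sq, ← frobSum_sq, ← pow_mul]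
  exact frobSum_pow_four hx

theorem frobSum_of_pow_four_eq_of_odd {d : ℕ} (hd : Odd d) {c : R} (hc : c ^ 4 = c) :
    frobSum d c = c := by
  rw [frobSum_of_pow_four_eq hc, natCast_eq_one_of_odd_of_two_eq_zero hd CharTwo.two_eq_zero,
    one_mul]

theorem frobSum_pow_four_sub_self (d : ℕ) (x : R) : frobSum d (x ^ 4 - x) = x ^ 4 ^ d - x := by
  induction d with
  | zero => simp [frobSum]
  | succ d ih => rw [frobSum_succ, ih, sub_pow_four_pow, ← pow_mul, ← pow_succ']; ring

end frobSum

section gExplicit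

variable {R : Type*} [CommRing R]

-- `gExplicit i j k X` is `g_{n,4}` for `n = 1 + 2(4^i + 4^j + 4^k)`
def gExplicit (i j k : ℕ) (x : R) : R :=
  x + (frobSum i x * frobSum j x + frobSum j x * frobSum k x + frobSum i x * frobSum k x) ^ 2

theorem map_gExplicit {S : Type*} [CommRing S] (φ : R →+* S) (i j k : ℕ) (x : R) :
    φ (gExplicit i j k x) = gExplicit i j k (φ x) := by
  simp [gExplicit, map_frobSum]

variable [CharP R 2]

theorem gExplicit_pow_four_sub_self (i j k : ℕ) (x : R) :
    gExplicit i j k (x ^ 4 - x) =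
      x + x ^ (2 * 4 ^ i + 2 * 4 ^ j) + x ^ (2 * 4 ^ j + 2 * 4 ^ k) +
        x ^ (2 * 4 ^ i + 2 * 4 ^ k) := by
  simp only [gExplicit, frobSum_pow_four_sub_self, pow_add, pow_mul']
  generalize x ^ 4 ^ i = a, x ^ 4 ^ j = b, x ^ 4 ^ k = c
  ring_nf
  reduce_mod_char!

theorem gExplicit_sub_eq_sq (m : ℕ) (x : R) :
    gExplicit 1 m (m + 2) x -
        (frobSum 2 x + x ^ 2 * frobSum (m + 1) x ^ 2 + frobSum m x ^ 2 * frobSum (m + 1) x ^ 2) =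
      ((x ^ 4 ^ (m + 1) - x) * (frobSum m x + x)) ^ 2 := by
  have h2 : frobSum 2 x = x + x ^ 4 := by simp [frobSum, sum_range_succ]
  rw [gExplicit, frobSum_one, h2, frobSum_succ (m + 1)]
  generalize frobSum m x = s, frobSum (m + 1) x = t, x ^ 4 ^ (m + 1) = y
  ring_nf
  reduce_mod_char!

theorem gExplicit_of_pow_eq_self {m : ℕ} {x : R} (hx : x ^ 4 ^ (m + 1) = x) :
    gExplicit 1 m (m + 2) x =
      x + x ^ 4 + frobSum (m + 1) x ^ 2 * (x ^ 2 + x ^ (2 * 4 ^ m)) + frobSum (m + 1) x := by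
  have ht := pow_four_frobSum hx
  rw [gExplicit, frobSum_one, frobSum_succ (m + 1), hx, pow_mul']
  rw [frobSum_succ m] at ht ⊢
  generalize frobSum m x = s, x ^ 4 ^ m = a at ht ⊢
  linear_combination (norm := ring_nf) ht
  reduce_mod_char!

theorem frobSum_gExplicit {m : ℕ} (hm : Odd (m + 1)) {x : R} (hx : x ^ 4 ^ (m + 1) = x) :
    frobSum (m + 1) (gExplicit 1 m (m + 2) x) = frobSum (m + 1) x := by
  have ht := pow_four_frobSum hx
  have ht2 : (frobSum (m + 1) x ^ 2) ^ 4 = frobSum (m + 1) x ^ 2 := by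
    rw [← pow_mul, pow_mul', ht]
  rw [gExplicit_of_pow_eq_self hx]
  simp only [frobSum_add, frobSum_mul_of_pow_four_eq ht2, pow_mul', frobSum_sq,
    frobSum_of_pow_four_eq_of_odd hm ht, frobSum_pow_four hx, frobSum_pow_four_pow hx]
  linear_combination (norm := ring_nf) 2 * ht
  reduce_mod_char!

theorem eq_zero_of_frobSum_eq_zero [NoZeroDivisors R] {m : ℕ} (hm : Odd (m + 1)) {t z : R}
    (ht : t ^ 4 = t) (hz : z ^ 4 ^ (m + 1) = z) (hzt : frobSum (m + 1) z = 0)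
    (h : z + z ^ 4 + t ^ 2 * (z ^ 2 + z ^ (2 * 4 ^ m)) = 0) : z = 0 := by
  have hw : (z ^ (2 * 4 ^ m)) ^ 2 = z := by
    rw [← pow_mul, show 2 * 4 ^ m * 2 = 4 ^ (m + 1) by ring, hz]
  -- squaring `h` turns `z ^ (2 * 4 ^ m)` into `z`
  have hfactor : (z ^ 4 + z) * (z ^ 4 + z + t) = 0 := by
    linear_combination (norm := ring_nf) (z + z ^ 4 + t ^ 2 * (z ^ 2 + z ^ (2 * 4 ^ m))) * h
      - (z ^ 4 + z) * ht - t ^ 4 * hw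
    reduce_mod_char!
  have hz4 : z ^ 4 = z := by
    rcases mul_eq_zero.mp hfactor with h1 | h1
    · exact CharTwo.add_eq_zero.mp h1
    · have hzt' : z ^ 4 + z = t := CharTwo.add_eq_zero.mp h1
      have h0 : t = 0 := by
        rw [← frobSum_of_pow_four_eq_of_odd hm ht, ← hzt', frobSum_add, frobSum_pow_four hz, hzt,
          add_zero]
      rw [h0] at hzt'
      exact CharTwo.add_eq_zero.mp hzt'
  exact (frobSum_of_pow_four_eq_of_odd hm hz4).symm.trans hzt

theorem gExplicit_injective [NoZeroDivisors R] {m : ℕ} (hm : Odd (m + 1))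
    (hK : ∀ x : R, x ^ 4 ^ (m + 1) = x) : Function.Injective (gExplicit 1 m (m + 2) : R → R) := by
  intro x y hxy
  have htr : frobSum (m + 1) x = frobSum (m + 1) y := by
    rw [← frobSum_gExplicit hm (hK x), hxy, frobSum_gExplicit hm (hK y)]
  rw [gExplicit_of_pow_eq_self (hK x), gExplicit_of_pow_eq_self (hK y), ← htr] at hxy
  have h4 : (x - y) ^ 4 = x ^ 4 - y ^ 4 := by simpa using sub_pow_four_pow x y 1
  have h2 : (x - y) ^ 2 = x ^ 2 - y ^ 2 := sub_pow_char x y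
  have h2m : (x - y) ^ (2 * 4 ^ m) = x ^ (2 * 4 ^ m) - y ^ (2 * 4 ^ m) := by
    rw [pow_mul', sub_pow_four_pow, sub_pow_char, ← pow_mul', ← pow_mul']
  rw [← sub_eq_zero]
  refine eq_zero_of_frobSum_eq_zero hm (pow_four_frobSum (hK x)) (hK _) ?_ ?_
  · rw [CharTwo.sub_eq_add, frobSum_add, htr, CharTwo.add_self_eq_zero]
  · rw [h4, h2, h2m]
    linear_combination hxy

end gExplicit

/-- Proposition 3.5: for `q = 4` and `n = 1 + 2q + 2q^{e−1} + 2q^{e+1}` (with `e > 1`),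
`g_{n,q} ≡ S_2 + X²S_e² + S_{e−1}²S_e² (mod X^{q^e} − X)`; moreover if `e` is odd,
then `g_{n,q}` permutes `F_{q^e}`. -/
theorem stmt15 (e : ℕ) (he : 1 < e)
    (E : Type*) [Field E] [Fintype E] (hE : Fintype.card E = 4 ^ e)
    (F4 : Subfield E) [Fintype F4] (hF4 : Fintype.card F4 = 4)
    (n : ℕ) (hn : n = 1 + 2 * 4 + 2 * 4 ^ (e - 1) + 2 * 4 ^ (e + 1))
    (g : Polynomial E)
    (hg : ∑ c : F4, (X + C (c : E)) ^ n = g.comp (X ^ 4 - X))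
    (S : ℕ → Polynomial E) (hS : ∀ d, S d = ∑ i ∈ Finset.range d, X ^ 4 ^ i) :
    (X ^ 4 ^ e - X) ∣ g - (S 2 + X ^ 2 * S e ^ 2 + S (e - 1) ^ 2 * S e ^ 2) ∧
    (Odd e → Function.Bijective fun x : E => g.eval x) := by
  obtain ⟨m, rfl⟩ : ∃ m, e = m + 1 := ⟨e - 1, by omega⟩
  obtain rfl : S = fun d => frobSum d X := funext hS
  have : CharP E 2 := (CharP.charP_iff_prime_eq_zero Nat.prime_two).mpr <| by
    rw [Nat.cast_ofNat, ← map_ofNat F4.subtype 2, two_eq_zero_of_card_eq_four hF4, map_zero]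
  have hn' : n = 1 + 2 * 4 ^ 1 + 2 * 4 ^ m + 2 * 4 ^ (m + 2) := by rw [hn, Nat.add_sub_cancel]; ring
  have hdeg : (X ^ 4 - X : E[X]).natDegree ≠ 0 := by
    rw [show (X ^ 4 - X : E[X]).natDegree = 4 by compute_degree!]
    norm_num
  have hgG : g = gExplicit 1 m (m + 2) X := by
    refine comp_left_injective hdeg ?_
    change g.comp _ = (gExplicit 1 m (m + 2) X).comp _
    rw [← hg, ← coe_compRingHom_apply, map_gExplicit, coe_compRingHom_apply, X_comp, hn',
      gExplicit_pow_four_sub_self]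
    exact sum_add_pow_of_card_eq_four hF4 (C.comp F4.subtype) X 1 m (m + 2)
  refine ⟨?_, fun hm => ?_⟩
  · rw [Nat.add_sub_cancel, hgG, gExplicit_sub_eq_sq]
    exact (dvd_mul_right _ _).trans (dvd_pow_self _ two_ne_zero)
  · have hK : ∀ x : E, x ^ 4 ^ (m + 1) = x := fun x => hE ▸ FiniteField.pow_card x
    have heval : (fun x => g.eval x) = gExplicit 1 m (m + 2) := by
      funext x
      rw [hgG, ← coe_evalRingHom, map_gExplicit, coe_evalRingHom, eval_X]
    rw [heval]
    exact Finite.injective_iff_bijective.mp (gExplicit_injective hm hK)
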